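/- Let $(A_0,A_1)$ and $(B_0,B_1)$ be Banach couples with $A_0\subset A_1$, and let $T:A_1\to B_1$ satisfy: $T(A_0)\subset B_0$ with $\|Ta\|_{B_0}\le C_0\|a\|_{A_0}$ for all $a\in A_0$; $\|Ta-Ta'\|_{B_1}\le C_1\|a-a'\|_{A_1}$ for all $a,a'\in A_1$; and $T$ maps every bounded subset of $A_0$ to a relatively compact subset of $B_0$. Then for each $\theta\in(0,1)$ and $p\in[1,\infty]$, $T$ maps every bounded subset of $(A_0,A_1)_{\theta,p}$ to a relatively compact subset of $B_0+B_1$. -/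

import Mathlib

open scoped ENNReal
open Filter Topology MeasureTheory

/-- A member of a Banach couple, modeled as an extended-real-valued norm on a common
ambient real vector space `X`; the space itself is `{x | N x < ∞}`.  The `complete`
field expresses that this space is a Banach space. -/
structure CoupleNorm (X : Type*) [AddCommGroup X] [Module ℝ X] where
  N : X → ℝ≥0∞
  zero : N 0 = 0
  add_le : ∀ x y, N (x + y) ≤ N x + N y
  smul_eq : ∀ (c : ℝ) (x : X), N (c • x) = ENNReal.ofReal |c| * N x
  definite : ∀ x, N x = 0 → x = 0
  complete : ∀ u : ℕ → X, (∀ n, N (u n) < ∞) →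
    (∀ ε : ℝ≥0∞, 0 < ε → ∃ n0, ∀ m n, n0 ≤ m → n0 ≤ n → N (u m - u n) < ε) →
    ∃ x, Tendsto (fun n => N (u n - x)) atTop (𝓝 0)

namespace CoupleNorm

variable {X : Type*} [AddCommGroup X] [Module ℝ X]

/-- The Peetre K-functional of the couple `(N0, N1)`. -/
noncomputable def Kfun (N0 N1 : CoupleNorm X) (t : ℝ) (x : X) : ℝ≥0∞ :=
  ⨅ y : X, N0.N y + ENNReal.ofReal t * N1.N (x - y)

/-- The measure dt/t on (0,∞). -/
noncomputable def haarMeas : Measure ℝ :=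
  (volume.restrict (Set.Ioi (0 : ℝ))).withDensity fun t => ENNReal.ofReal t⁻¹

/-- The real interpolation norm `(θ, p)`, for `p ∈ [1,∞]`, as an extended real. -/
noncomputable def interpNorm (N0 N1 : CoupleNorm X) (θ : ℝ) (p : ℝ≥0∞) (x : X) : ℝ≥0∞ :=
  if p = ∞ then ⨆ t : {t : ℝ // 0 < t}, (ENNReal.ofReal t.1) ^ (-θ) * Kfun N0 N1 t.1 x
  else (∫⁻ t, ((ENNReal.ofReal t) ^ (-θ) * Kfun N0 N1 t x) ^ p.toReal ∂haarMeas) ^ (1 / p.toReal)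

/-- `N0 ⊂ N1`: continuous embedding (the inclusion of domains is then automatic). -/
def Embeds (N0 N1 : CoupleNorm X) : Prop :=
  ∃ c : ℝ, 0 < c ∧ ∀ x, N1.N x ≤ ENNReal.ofReal c * N0.N x

/-- A set bounded with respect to a generalized norm. -/
def BddWith (NN : X → ℝ≥0∞) (S : Set X) : Prop :=
  ∃ R : ℝ, ∀ x ∈ S, NN x ≤ ENNReal.ofReal R

/-- Sequential relative compactness with respect to a generalized norm. -/
def RelCompactWith (NN : X → ℝ≥0∞) (S : Set X) : Prop :=
  ∀ u : ℕ → X, (∀ n, u n ∈ S) →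
    ∃ (σ : ℕ → ℕ) (x : X), StrictMono σ ∧
      Tendsto (fun n => NN (u (σ n) - x)) atTop (𝓝 0)

/-- Sequential compactness (with limits inside the set) w.r.t. a generalized norm. -/
def CompactWith (NN : X → ℝ≥0∞) (S : Set X) : Prop :=
  ∀ u : ℕ → X, (∀ n, u n ∈ S) →
    ∃ x ∈ S, ∃ σ : ℕ → ℕ, StrictMono σ ∧
      Tendsto (fun n => NN (u (σ n) - x)) atTop (𝓝 0)

end CoupleNorm

/-!
A bounded set `M` of `(A₀, A₁)_{θ,p}` satisfies `K(t, a) ≲ t ^ θ` uniformly in `a ∈ M`, so every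
`a ∈ M` splits as `a = y + (a - y)` with `‖y‖_{A₀} ≲ t ^ θ` and `‖a - y‖_{A₁} ≲ t ^ (θ - 1)`.
By the Lipschitz bound, `T a` is then within `C₁ t ^ (θ - 1)` of `T y` in `B₁`, hence in `B₀ + B₁`,
while the `T y` form a relatively compact subset of `B₀`, hence a totally bounded subset of
`B₀ + B₁`. Letting `t → ∞`, `T(M)` is totally bounded in the complete space `B₀ + B₁`, hence
relatively compact.
-/

lemma exists_pos_mul_rpow_lt {c δ : ℝ≥0∞} (hc : c ≠ ∞) (hδ : 0 < δ) {s : ℝ} (hs : s < 0) :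
    ∃ t > 0, c * ENNReal.ofReal t ^ s < δ := by
  have hpow : Tendsto (fun t : ℝ => t ^ s) atTop (𝓝 0) := by
    simpa using tendsto_rpow_neg_atTop (neg_pos.2 hs)
  have hlim := ENNReal.Tendsto.const_mul (ENNReal.tendsto_ofReal hpow) (Or.inr hc)
  rw [ENNReal.ofReal_zero, mul_zero] at hlim
  obtain ⟨t, htδ, ht⟩ := ((hlim.eventually (gt_mem_nhds hδ)).and (eventually_gt_atTop 0)).exists
  exact ⟨t, ht, by rwa [ENNReal.ofReal_rpow_of_pos ht]⟩

lemma totallyBounded_of_forall_exists_near {α : Type*} [PseudoEMetricSpace α] {s : Set α}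
    (h : ∀ ε > 0, ∃ t, TotallyBounded t ∧ ∀ x ∈ s, ∃ y ∈ t, edist x y < ε) :
    TotallyBounded s := by
  refine EMetric.totallyBounded_iff.2 fun ε hε => ?_
  obtain ⟨t, ht, hst⟩ := h (ε / 2) (ENNReal.half_pos hε.ne')
  obtain ⟨F, hF, htF⟩ := EMetric.totallyBounded_iff.1 ht (ε / 2) (ENNReal.half_pos hε.ne')
  refine ⟨F, hF, fun x hx => ?_⟩
  obtain ⟨y, hy, hxy⟩ := hst x hx
  obtain ⟨z, hz, hyz⟩ := Set.mem_iUnion₂.1 (htF hy)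
  refine Set.mem_iUnion₂.2 ⟨z, hz, ?_⟩
  calc edist x z ≤ edist x y + edist y z := edist_triangle _ _ _
    _ < ε / 2 + ε / 2 := ENNReal.add_lt_add hxy hyz
    _ = ε := ENNReal.add_halves ε

structure AddGroupESeminorm (G : Type*) [AddGroup G] where
  toFun : G → ℝ≥0∞
  map_zero' : toFun 0 = 0
  add_le' : ∀ x y, toFun (x + y) ≤ toFun x + toFun y
  neg' : ∀ x, toFun (-x) = toFun x

namespace AddGroupESeminorm

variable {G : Type*} [AddCommGroup G]

lemma sub_rev (p : AddGroupESeminorm G) (x y : G) : p.toFun (x - y) = p.toFun (y - x) := by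
  rw [← neg_sub, p.neg']

lemma sub_le_sub_add_sub (p : AddGroupESeminorm G) (x y z : G) :
    p.toFun (x - z) ≤ p.toFun (x - y) + p.toFun (y - z) := by
  simpa using p.add_le' (x - y) (y - z)

/-- A copy of `G` carrying the pseudo-emetric `(x, y) ↦ p (x - y)`; being a type synonym, it lets
several seminorms on the same group coexist as distinct uniform structures. -/
def Space (_p : AddGroupESeminorm G) : Type _ := G

def toSpace (p : AddGroupESeminorm G) : G ≃ p.Space := Equiv.refl G

noncomputable instance (p : AddGroupESeminorm G) : PseudoEMetricSpace p.Space where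
  edist x y := p.toFun (p.toSpace.symm x - p.toSpace.symm y)
  edist_self x := by simp [p.map_zero']
  edist_comm x y := p.sub_rev _ _
  edist_triangle x y z := p.sub_le_sub_add_sub _ _ _

variable {p q : AddGroupESeminorm G}

@[simp]
lemma edist_toSpace (x y : G) : edist (p.toSpace x) (p.toSpace y) = p.toFun (x - y) := rfl

lemma tendsto_toSpace_iff {u : ℕ → G} {x : G} :
    Tendsto (p.toSpace ∘ u) atTop (𝓝 (p.toSpace x)) ↔
      Tendsto (fun n => p.toFun (u n - x)) atTop (𝓝 0) :=
  tendsto_iff_edist_tendsto_0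

lemma totallyBounded_of_relCompactWith {S : Set G} (hS : CoupleNorm.RelCompactWith p.toFun S) :
    TotallyBounded (p.toSpace '' S) := by
  rw [EMetric.totallyBounded_iff]
  by_contra! h
  obtain ⟨ε, hε, hnet⟩ := h
  -- Failing total boundedness yields an `ε`-separated sequence, which has no Cauchy subsequence.
  obtain ⟨u, hu⟩ := Set.seq_of_forall_finite_exists
      (P := fun x F => x ∈ S ∧ ∀ y ∈ F, ε ≤ p.toFun (x - y)) fun F hF => by
    obtain ⟨_, ⟨x, hx, rfl⟩, hxF⟩ := Set.not_subset.1 (hnet (p.toSpace '' F) (hF.image _))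
    simp only [Set.mem_iUnion, Set.mem_image, exists_prop, not_exists, not_and] at hxF
    exact ⟨x, hx, fun y hy => by simpa using hxF _ ⟨y, hy, rfl⟩⟩
  obtain ⟨σ, x, hσ, hlim⟩ := hS u fun n => (hu n).1
  obtain ⟨N, hN⟩ := EMetric.cauchySeq_iff.1 (tendsto_toSpace_iff.2 hlim).cauchySeq ε hε
  have hsep := (hu (σ (N + 1))).2 (u (σ N)) ⟨σ N, hσ N.lt_succ_self, rfl⟩
  exact (hN _ N.le_succ _ le_rfl).not_ge hsep

lemma relCompactWith_of_totallyBounded [CompleteSpace p.Space] {S : Set G}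
    (hS : TotallyBounded (p.toSpace '' S)) : CoupleNorm.RelCompactWith p.toFun S := by
  intro u hu
  obtain ⟨x, -, σ, hσ, hlim⟩ := (hS.closure.isCompact_of_isClosed isClosed_closure).tendsto_subseq
    (x := p.toSpace ∘ u) fun n => subset_closure ⟨u n, hu n, rfl⟩
  exact ⟨σ, p.toSpace.symm x, hσ, tendsto_toSpace_iff.1 hlim⟩

lemma totallyBounded_toSpace_image_of_le (hqp : ∀ x, q.toFun x ≤ p.toFun x) {S : Set G}
    (hS : TotallyBounded (p.toSpace '' S)) : TotallyBounded (q.toSpace '' S) := by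
  have hlip : LipschitzWith 1 (q.toSpace ∘ p.toSpace.symm) :=
    LipschitzWith.of_edist_le fun _ _ => hqp _
  simpa [Set.image_image] using hS.image hlip.uniformContinuous

lemma cauchySeq_partialSums {a : ℕ → G} (ha : ∀ n, p.toFun (a n) ≤ 2⁻¹ ^ n) :
    CauchySeq (p.toSpace ∘ fun n => ∑ j ∈ Finset.range n, a j) := by
  refine cauchySeq_of_edist_le_geometric_two 1 ENNReal.one_ne_top fun n => ?_
  simpa [Finset.sum_range_succ, p.neg', ENNReal.inv_pow] using ha n

/-- For the norms of a couple `(B₀, B₁)` this is the norm of the sum space `B₀ + B₁`. -/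
noncomputable def infConv (p q : AddGroupESeminorm G) : AddGroupESeminorm G where
  toFun x := ⨅ y, p.toFun y + q.toFun (x - y)
  map_zero' := le_antisymm (iInf_le_of_le 0 (by simp [p.map_zero', q.map_zero'])) zero_le
  add_le' x x' := ENNReal.le_iInf_add_iInf fun y y' => iInf_le_of_le (y + y') <|
    calc p.toFun (y + y') + q.toFun (x + x' - (y + y'))
        ≤ (p.toFun y + p.toFun y') + (q.toFun (x - y) + q.toFun (x' - y')) := by
          gcongr
          · exact p.add_le' y y'
          · rw [show x + x' - (y + y') = (x - y) + (x' - y') by abel]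
            exact q.add_le' _ _
      _ = p.toFun y + q.toFun (x - y) + (p.toFun y' + q.toFun (x' - y')) := by ring
  neg' x := (Equiv.neg G).iInf_congr fun y => by
    rw [Equiv.neg_apply, p.neg', show x - -y = -(-x - y) by abel, q.neg']

lemma infConv_toFun (x : G) : (p.infConv q).toFun x = ⨅ y, p.toFun y + q.toFun (x - y) := rfl

lemma infConv_le_add (x y : G) : (p.infConv q).toFun (x + y) ≤ p.toFun x + q.toFun y :=
  iInf_le_of_le x (by simp)

lemma infConv_le_left (x : G) : (p.infConv q).toFun x ≤ p.toFun x := by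
  simpa [q.map_zero'] using p.infConv_le_add (q := q) x 0

lemma infConv_le_right (x : G) : (p.infConv q).toFun x ≤ q.toFun x := by
  simpa [p.map_zero'] using p.infConv_le_add (q := q) 0 x

instance [CompleteSpace p.Space] [CompleteSpace q.Space] : CompleteSpace (p.infConv q).Space := by
  refine EMetric.complete_of_convergent_controlled_sequences (fun n => 2⁻¹ ^ n)
    (fun n => ENNReal.pow_pos (by norm_num) n) fun u hu => ?_
  obtain ⟨w, rfl⟩ : ∃ w : ℕ → G, u = (p.infConv q).toSpace ∘ w :=
    ⟨(p.infConv q).toSpace.symm ∘ u, by ext; simp⟩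
  -- Split each increment `w (j + 1) - w j` as `a j + b j` with `p (a j), q (b j) < 2⁻¹ ^ j`;
  -- the series `∑ a j` and `∑ b j` converge separately.
  have hsplit : ∀ j, ∃ a, p.toFun a + q.toFun (w (j + 1) - w j - a) < 2⁻¹ ^ j := fun j => by
    have hj := hu j (j + 1) j j.le_succ le_rfl
    rw [Function.comp_apply, Function.comp_apply, edist_toSpace, infConv_toFun] at hj
    exact iInf_lt_iff.1 hj
  choose a ha using hsplit
  set b := fun j => w (j + 1) - w j - a j
  obtain ⟨a', ha'⟩ := cauchySeq_tendsto_of_complete (cauchySeq_partialSums (p := p) (a := a)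
    fun j => (le_self_add).trans (ha j).le)
  obtain ⟨b', hb'⟩ := cauchySeq_tendsto_of_complete (cauchySeq_partialSums (p := q) (a := b)
    fun j => (le_add_self).trans (ha j).le)
  obtain ⟨a', rfl⟩ := p.toSpace.surjective a'
  obtain ⟨b', rfl⟩ := q.toSpace.surjective b'
  have hw : ∀ J, w J - (w 0 + a' + b') =
      (∑ j ∈ Finset.range J, a j - a') + (∑ j ∈ Finset.range J, b j - b') := fun J => by
    have hsum : ∑ j ∈ Finset.range J, a j + ∑ j ∈ Finset.range J, b j = w J - w 0 := by
      rw [← Finset.sum_add_distrib, ← Finset.sum_range_sub]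
      simp [b]
    rw [← sub_add_cancel (w J) (w 0), ← hsum]
    abel
  refine ⟨(p.infConv q).toSpace (w 0 + a' + b'), tendsto_toSpace_iff.2 ?_⟩
  refine tendsto_of_tendsto_of_tendsto_of_le_of_le tendsto_const_nhds
    (by simpa using (tendsto_toSpace_iff.1 ha').add (tendsto_toSpace_iff.1 hb'))
    (fun _ => zero_le) fun J => ?_
  rw [hw]
  exact infConv_le_add _ _

end AddGroupESeminorm

namespace CoupleNorm

open AddGroupESeminorm

variable {X : Type*} [AddCommGroup X] [Module ℝ X]

lemma N_neg (N : CoupleNorm X) (x : X) : N.N (-x) = N.N x := by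
  simpa using N.smul_eq (-1) x

def toESeminorm (N : CoupleNorm X) : AddGroupESeminorm X := ⟨N.N, N.zero, N.add_le, N.N_neg⟩

@[simp]
lemma toESeminorm_toFun (N : CoupleNorm X) : N.toESeminorm.toFun = N.N := rfl

instance (N : CoupleNorm X) : CompleteSpace N.toESeminorm.Space := by
  refine EMetric.complete_of_convergent_controlled_sequences (fun n => 2⁻¹ ^ n)
    (fun n => ENNReal.pow_pos (by norm_num) n) fun u hu => ?_
  obtain ⟨w, rfl⟩ : ∃ w : ℕ → X, u = N.toESeminorm.toSpace ∘ w :=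
    ⟨N.toESeminorm.toSpace.symm ∘ u, by ext; simp⟩
  have hw : ∀ k m n, k ≤ m → k ≤ n → N.N (w m - w n) < 2⁻¹ ^ k := hu
  -- `N.complete` only applies to sequences of finite norm, hence the shift by `w 0`.
  obtain ⟨x, hx⟩ := N.complete (fun n => w n - w 0)
    (fun n => lt_top_of_lt (hw 0 n 0 n.zero_le le_rfl)) fun ε hε => by
      obtain ⟨k, hk⟩ := ENNReal.exists_inv_two_pow_lt hε.ne'
      exact ⟨k, fun m n hm hn => by simpa using (hw k m n hm hn).trans hk⟩
  exact ⟨N.toESeminorm.toSpace (x + w 0),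
    tendsto_toSpace_iff.2 (by simpa [sub_sub, add_comm] using hx)⟩

lemma Kfun_one_eq_infConv (N0 N1 : CoupleNorm X) :
    Kfun N0 N1 1 = (N0.toESeminorm.infConv N1.toESeminorm).toFun := by
  funext x
  simp [Kfun, infConv_toFun]

lemma Kfun_mono (N0 N1 : CoupleNorm X) (x : X) : Monotone fun t => Kfun N0 N1 t x :=
  fun _ _ hst => iInf_mono fun _ => by gcongr

lemma inv_two_le_haarMeas_Ioo {t : ℝ} (ht : 0 < t) : 2⁻¹ ≤ haarMeas (Set.Ioo t (2 * t)) := by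
  rw [haarMeas, withDensity_apply _ measurableSet_Ioo, Measure.restrict_restrict measurableSet_Ioo,
    Set.inter_eq_left.2 (Set.Ioo_subset_Ioi_self.trans (Set.Ioi_subset_Ioi ht.le))]
  calc (2 : ℝ≥0∞)⁻¹ = ∫⁻ _ in Set.Ioo t (2 * t), ENNReal.ofReal (2 * t)⁻¹ := by
        rw [setLIntegral_const, Real.volume_Ioo, ← ENNReal.ofReal_mul (by positivity),
          show (2 * t)⁻¹ * (2 * t - t) = 2⁻¹ by field_simp; ring,
          ENNReal.ofReal_inv_of_pos two_pos, ENNReal.ofReal_ofNat]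
    _ ≤ ∫⁻ s in Set.Ioo t (2 * t), ENNReal.ofReal s⁻¹ :=
        setLIntegral_mono (by fun_prop) fun s hs =>
          ENNReal.ofReal_le_ofReal (inv_anti₀ (ht.trans hs.1) hs.2.le)

variable {N0 N1 : CoupleNorm X} {θ : ℝ} {p : ℝ≥0∞} {x : X} {R : ℝ≥0∞} {t : ℝ}

lemma rpow_neg_mul_Kfun_rpow_le_two_mul_lintegral (hθ : 0 ≤ θ) {q : ℝ} (hq : 0 ≤ q)
    (ht : 0 < t) :
    (ENNReal.ofReal (2 * t) ^ (-θ) * Kfun N0 N1 t x) ^ q ≤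
      2 * ∫⁻ s, (ENNReal.ofReal s ^ (-θ) * Kfun N0 N1 s x) ^ q ∂haarMeas := by
  set c := ENNReal.ofReal (2 * t) ^ (-θ) * Kfun N0 N1 t x
  -- On `(t, 2t)`, which has `dt/t`-measure at least `1/2`, the integrand is at least `c ^ q`.
  calc c ^ q = 2 * (2⁻¹ * c ^ q) := by
        rw [← mul_assoc, ENNReal.mul_inv_cancel two_ne_zero ENNReal.ofNat_ne_top, one_mul]
    _ ≤ 2 * (haarMeas (Set.Ioo t (2 * t)) * c ^ q) := by
        gcongr
        exact inv_two_le_haarMeas_Ioo ht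
    _ = 2 * ∫⁻ s, (Set.Ioo t (2 * t)).indicator (fun _ => c ^ q) s ∂haarMeas := by
        rw [lintegral_indicator_const measurableSet_Ioo, mul_comm (haarMeas _)]
    _ ≤ 2 * ∫⁻ s, (ENNReal.ofReal s ^ (-θ) * Kfun N0 N1 s x) ^ q ∂haarMeas := by
        refine mul_le_mul_right (lintegral_mono fun s => ?_) _
        by_cases hs : s ∈ Set.Ioo t (2 * t)
        · rw [Set.indicator_of_mem hs]
          gcongr
          refine mul_le_mul' ?_ (Kfun_mono N0 N1 x hs.1.le)
          rw [ENNReal.rpow_neg, ENNReal.rpow_neg]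
          gcongr
          exact hs.2.le
        · simp [Set.indicator_of_notMem hs]

lemma rpow_neg_mul_Kfun_le_of_interpNorm_le (hθ : 0 ≤ θ) (hp : 1 ≤ p)
    (hx : interpNorm N0 N1 θ p x ≤ R) (ht : 0 < t) :
    ENNReal.ofReal (2 * t) ^ (-θ) * Kfun N0 N1 t x ≤ 2 * R := by
  by_cases hp_top : p = ∞
  · rw [interpNorm, if_pos hp_top] at hx
    calc ENNReal.ofReal (2 * t) ^ (-θ) * Kfun N0 N1 t x
        ≤ ENNReal.ofReal (2 * t) ^ (-θ) * Kfun N0 N1 (2 * t) x := by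
          gcongr
          exact Kfun_mono N0 N1 x (by linarith)
      _ ≤ R := (le_iSup_of_le ⟨2 * t, by positivity⟩ le_rfl).trans hx
      _ ≤ 2 * R := le_mul_of_one_le_left zero_le one_le_two
  rw [interpNorm, if_neg hp_top] at hx
  set q := p.toReal
  have hq : 1 ≤ q := by simpa using ENNReal.toReal_mono hp_top hp
  have hq0 : 0 < q := one_pos.trans_le hq
  rw [← ENNReal.rpow_le_rpow_iff hq0]
  calc (ENNReal.ofReal (2 * t) ^ (-θ) * Kfun N0 N1 t x) ^ q
      ≤ 2 * ∫⁻ s, (ENNReal.ofReal s ^ (-θ) * Kfun N0 N1 s x) ^ q ∂haarMeas :=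
        rpow_neg_mul_Kfun_rpow_le_two_mul_lintegral hθ hq0.le ht
    _ ≤ 2 * R ^ q := by
        gcongr
        simpa [← ENNReal.rpow_mul, hq0.ne'] using ENNReal.rpow_le_rpow hx hq0.le
    _ ≤ 2 ^ q * R ^ q := by
        gcongr
        simpa using ENNReal.rpow_le_rpow_of_exponent_le one_le_two hq
    _ = (2 * R) ^ q := (ENNReal.mul_rpow_of_nonneg _ _ hq0.le).symm

lemma Kfun_le_of_interpNorm_le (hθ0 : 0 ≤ θ) (hθ1 : θ ≤ 1) (hp : 1 ≤ p)
    (hx : interpNorm N0 N1 θ p x ≤ R) (ht : 0 < t) :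
    Kfun N0 N1 t x ≤ ENNReal.ofReal t ^ θ * (4 * R) := by
  have h2t : ENNReal.ofReal (2 * t) ≠ 0 := by simpa using ht
  calc Kfun N0 N1 t x
      = ENNReal.ofReal (2 * t) ^ θ * (ENNReal.ofReal (2 * t) ^ (-θ) * Kfun N0 N1 t x) := by
        rw [← mul_assoc, ← ENNReal.rpow_add _ _ h2t ENNReal.ofReal_ne_top, add_neg_cancel,
          ENNReal.rpow_zero, one_mul]
    _ ≤ ENNReal.ofReal (2 * t) ^ θ * (2 * R) :=
        mul_le_mul_right (rpow_neg_mul_Kfun_le_of_interpNorm_le hθ0 hp hx ht) _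
    _ ≤ 2 * ENNReal.ofReal t ^ θ * (2 * R) := by
        rw [ENNReal.ofReal_mul zero_le_two, ENNReal.ofReal_ofNat,
          ENNReal.mul_rpow_of_nonneg _ _ hθ0]
        gcongr
        simpa using ENNReal.rpow_le_rpow_of_exponent_le one_le_two hθ1
    _ = ENNReal.ofReal t ^ θ * (4 * R) := by ring

lemma exists_decomp_of_interpNorm_le (hθ0 : 0 ≤ θ) (hθ1 : θ ≤ 1) (hp : 1 ≤ p)
    (hx : interpNorm N0 N1 θ p x ≤ R) (hR : R ≠ ∞) (ht : 0 < t) :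
    ∃ y, N0.N y ≤ ENNReal.ofReal t ^ θ * (4 * R + 1) ∧
      N1.N (x - y) ≤ ENNReal.ofReal t ^ (θ - 1) * (4 * R + 1) := by
  have ht0 : ENNReal.ofReal t ≠ 0 := by simpa using ht
  have htθ : ENNReal.ofReal t ^ θ ≠ 0 := by simp [ht]
  have hlt : Kfun N0 N1 t x < ENNReal.ofReal t ^ θ * (4 * R + 1) :=
    (Kfun_le_of_interpNorm_le hθ0 hθ1 hp hx ht).trans_lt <|
      ENNReal.mul_lt_mul_right htθ (ENNReal.rpow_ne_top_of_ne_zero ht0 ENNReal.ofReal_ne_top)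
        (ENNReal.lt_add_right (ENNReal.mul_ne_top ENNReal.ofNat_ne_top hR) one_ne_zero)
  obtain ⟨y, hy⟩ := iInf_lt_iff.1 hlt
  refine ⟨y, le_self_add.trans hy.le, ?_⟩
  rw [← ENNReal.mul_le_mul_iff_right ht0 ENNReal.ofReal_ne_top, ← mul_assoc]
  have hsplit : ENNReal.ofReal t ^ θ = ENNReal.ofReal t * ENNReal.ofReal t ^ (θ - 1) := by
    simpa using ENNReal.rpow_add 1 (θ - 1) ht0 ENNReal.ofReal_ne_top
  exact le_add_self.trans (hsplit ▸ hy.le)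

lemma exists_approx_of_interpNorm_le {Y : Type*} [AddCommGroup Y] [Module ℝ Y]
    {B1 : CoupleNorm Y} (hN : Embeds N0 N1) {T : X → Y} {C1 : ℝ}
    (hT1 : ∀ a a' : X, N1.N a < ∞ → N1.N a' < ∞ →
      B1.N (T a - T a') ≤ ENNReal.ofReal C1 * N1.N (a - a'))
    (hθ0 : 0 ≤ θ) (hθ1 : θ ≤ 1) (hp : 1 ≤ p)
    (hx : interpNorm N0 N1 θ p x ≤ R) (hR : R ≠ ∞) (ht : 0 < t) :
    ∃ y, N0.N y ≤ ENNReal.ofReal t ^ θ * (4 * R + 1) ∧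
      B1.N (T x - T y) ≤ ENNReal.ofReal C1 * (ENNReal.ofReal t ^ (θ - 1) * (4 * R + 1)) := by
  obtain ⟨y, hy0, hy1⟩ := exists_decomp_of_interpNorm_le hθ0 hθ1 hp hx hR ht
  have hfin : ∀ s : ℝ, ENNReal.ofReal t ^ s * (4 * R + 1) < ∞ := fun s =>
    ENNReal.mul_lt_top
      (ENNReal.rpow_ne_top_of_ne_zero (by simpa using ht) ENNReal.ofReal_ne_top).lt_top
      (by finiteness)
  obtain ⟨c, -, hc⟩ := hN
  have hy : N1.N y < ∞ :=
    (hc y).trans_lt (ENNReal.mul_lt_top ENNReal.ofReal_lt_top (hy0.trans_lt (hfin θ)))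
  have hxy : N1.N (x - y) < ∞ := hy1.trans_lt (hfin _)
  have hx : N1.N x < ∞ := by
    simpa using (N1.add_le y (x - y)).trans_lt (ENNReal.add_lt_top.2 ⟨hy, hxy⟩)
  exact ⟨y, hy0, (hT1 x y hx hy).trans (by gcongr)⟩

end CoupleNorm

open AddGroupESeminorm

theorem stmt3_general {X Y : Type*} [AddCommGroup X] [Module ℝ X] [AddCommGroup Y] [Module ℝ Y]
    (A0 A1 : CoupleNorm X) (B0 B1 : CoupleNorm Y)
    (hA : CoupleNorm.Embeds A0 A1)
    (T : X → Y) (C1 : ℝ)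
    (hT1 : ∀ a a' : X, A1.N a < ∞ → A1.N a' < ∞ →
      B1.N (T a - T a') ≤ ENNReal.ofReal C1 * A1.N (a - a'))
    (hcpt : ∀ S : Set X, CoupleNorm.BddWith A0.N S →
      CoupleNorm.RelCompactWith B0.N (T '' S)) :
    ∀ θ : ℝ, 0 < θ → θ < 1 → ∀ p : ℝ≥0∞, 1 ≤ p →
      ∀ M : Set X, CoupleNorm.BddWith (CoupleNorm.interpNorm A0 A1 θ p) M →
        CoupleNorm.RelCompactWith (CoupleNorm.Kfun B0 B1 1) (T '' M) := by
  intro θ hθ0 hθ1 p hp M ⟨R, hR⟩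
  set c := 4 * ENNReal.ofReal R + 1
  rw [CoupleNorm.Kfun_one_eq_infConv]
  refine relCompactWith_of_totallyBounded (totallyBounded_of_forall_exists_near fun ε hε => ?_)
  obtain ⟨t, ht, hsmall⟩ :=
    exists_pos_mul_rpow_lt (c := ENNReal.ofReal C1 * c) (by finiteness) hε (sub_neg.2 hθ1)
  set S := {y | A0.N y ≤ ENNReal.ofReal t ^ θ * c}
  have hS : CoupleNorm.BddWith A0.N S :=
    ⟨(ENNReal.ofReal t ^ θ * c).toReal, fun y hy =>
      hy.trans_eq (ENNReal.ofReal_toReal (by finiteness)).symm⟩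
  refine ⟨_, totallyBounded_toSpace_image_of_le infConv_le_left
    (totallyBounded_of_relCompactWith (hcpt S hS)), ?_⟩
  rintro _ ⟨_, ⟨a, ha, rfl⟩, rfl⟩
  obtain ⟨y, hyS, hy⟩ := CoupleNorm.exists_approx_of_interpNorm_le hA hT1 hθ0.le hθ1.le hp
    (hR a ha) ENNReal.ofReal_ne_top ht
  refine ⟨_, ⟨T y, ⟨y, hyS, rfl⟩, rfl⟩, ?_⟩
  calc (infConv _ _).toFun (T a - T y) ≤ B1.N (T a - T y) := infConv_le_right _
    _ ≤ ENNReal.ofReal C1 * c * ENNReal.ofReal t ^ (θ - 1) := by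
        rw [mul_assoc, mul_comm c]
        exact hy
    _ < ε := hsmall

/-- nonlinear Lions–Peetre lemma, compactness into `B0 + B1`. -/
theorem stmt3 {X Y : Type*} [AddCommGroup X] [Module ℝ X] [AddCommGroup Y] [Module ℝ Y]
    (A0 A1 : CoupleNorm X) (B0 B1 : CoupleNorm Y)
    (hA : CoupleNorm.Embeds A0 A1)
    (T : X → Y) (C0 C1 : ℝ) (hC0 : 0 < C0) (hC1 : 0 < C1)
    (hT0 : ∀ a : X, B0.N (T a) ≤ ENNReal.ofReal C0 * A0.N a)
    (hT1 : ∀ a a' : X, A1.N a < ∞ → A1.N a' < ∞ →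
      B1.N (T a - T a') ≤ ENNReal.ofReal C1 * A1.N (a - a'))
    (hcpt : ∀ S : Set X, CoupleNorm.BddWith A0.N S →
      CoupleNorm.RelCompactWith B0.N (T '' S)) :
    ∀ θ : ℝ, 0 < θ → θ < 1 → ∀ p : ℝ≥0∞, 1 ≤ p →
      ∀ M : Set X, CoupleNorm.BddWith (CoupleNorm.interpNorm A0 A1 θ p) M →
        CoupleNorm.RelCompactWith (CoupleNorm.Kfun B0 B1 1) (T '' M) :=
  stmt3_general A0 A1 B0 B1 hA T C1 hT1 hcpt
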